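/- C_{#≤2} ≡_sW SEP₁: closed choice on Cantor space restricted to sets with at most two elements is strongly continuously Weihrauch equivalent to the restricted separation problem SEP₁. -/

import Mathlib

open Filter Topology

abbrev Baire : Type := ℕ → ℕ

/-- The pairing `⟨p,q⟩(2n) = p(n)`, `⟨p,q⟩(2n+1) = q(n)`. -/
def pairB (p q : Baire) : Baire := fun n => if n % 2 = 0 then p (n / 2) else q (n / 2)

/-- A problem: a partial multivalued function on Baire space. -/
structure Problem where
  dom : Set Baire
  sol : Baire → Set Baire

/-- Continuous Weihrauch reducibility. -/
def WRed (f g : Problem) : Prop :=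
  ∃ (Kd Hd : Set Baire) (K H : Baire → Baire),
    ContinuousOn K Kd ∧ ContinuousOn H Hd ∧
      ∀ p ∈ f.dom, p ∈ Kd ∧ K p ∈ g.dom ∧
        ∀ q ∈ g.sol (K p), pairB p q ∈ Hd ∧ H (pairB p q) ∈ f.sol p

/-- Strong continuous Weihrauch reducibility. -/
def SWRed (f g : Problem) : Prop :=
  ∃ (Kd Hd : Set Baire) (K H : Baire → Baire),
    ContinuousOn K Kd ∧ ContinuousOn H Hd ∧
      ∀ p ∈ f.dom, p ∈ Kd ∧ K p ∈ g.dom ∧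
        ∀ q ∈ g.sol (K p), q ∈ Hd ∧ H q ∈ f.sol p

def WEquiv (f g : Problem) : Prop := WRed f g ∧ WRed g f
def SWEquiv (f g : Problem) : Prop := SWRed f g ∧ SWRed g f
def WLt (f g : Problem) : Prop := WRed f g ∧ ¬ WRed g f

/-- `range(p-1)`. -/
def rangeM (p : Baire) : Set ℕ := {n | ∃ i, p i = n + 1}

/-- Characteristic function of a set of naturals. -/
noncomputable def chi (A : Set ℕ) : Baire := A.indicator fun _ => 1

noncomputable def EC : Problem where
  dom := Set.univ
  sol := fun p => {chi (rangeM p)}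

noncomputable def EC1 : Problem where
  dom := {p | ((rangeM p)ᶜ).encard ≤ 1}
  sol := fun p => {chi (rangeM p)}

def pfst (r : Baire) : Baire := fun n => r (2 * n)
def psnd (r : Baire) : Baire := fun n => r (2 * n + 1)

noncomputable def SEP : Problem where
  dom := {r | rangeM (pfst r) ∩ rangeM (psnd r) = ∅}
  sol := fun r =>
    {s | ∃ A : Set ℕ, s = chi A ∧ rangeM (pfst r) ⊆ A ∧ A ⊆ (rangeM (psnd r))ᶜ}

noncomputable def SEP1 : Problem where
  dom := {r | rangeM (pfst r) ∩ rangeM (psnd r) = ∅ ∧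
    ((rangeM (pfst r) ∪ rangeM (psnd r))ᶜ).encard ≤ 1}
  sol := SEP.sol

/- rationals -/
def ratEnum (i : ℕ) : ℚ :=
  ((i.unpair.1 : ℚ) - (i.unpair.2.unpair.1 : ℚ)) / ((i.unpair.2.unpair.2 : ℚ) + 1)

def rhoCauchy (p : Baire) (x : ℝ) : Prop :=
  ∀ n, |(ratEnum (p n) : ℝ) - x| ≤ (2 : ℝ) ^ (-(n : ℤ))

def rhoNaive (p : Baire) (x : ℝ) : Prop :=
  Tendsto (fun n => ((ratEnum (p n) : ℝ))) atTop (nhds x)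

def rhoLt (p : Baire) (x : ℝ) : Prop := rangeM p = {n | (ratEnum n : ℝ) < x}
def rhoGt (p : Baire) (x : ℝ) : Prop := rangeM p = {n | x < (ratEnum n : ℝ)}

def rhoCfLt (p : Baire) (x : ℝ) : Prop :=
  (∀ n, p n ≤ 1) ∧ ∀ n, (p n = 1 ↔ (ratEnum n : ℝ) < x)
def rhoCfGt (p : Baire) (x : ℝ) : Prop :=
  (∀ n, p n ≤ 1) ∧ ∀ n, (p n = 1 ↔ x < (ratEnum n : ℝ))

noncomputable def cfTail : List ℕ → ℝ
  | [] => 0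
  | b :: l => 1 / ((b : ℝ) + cfTail l)

noncomputable def cfApprox (p : Baire) (k : ℕ) : ℝ :=
  ((Denumerable.ofNat ℤ (p 0) : ℤ) : ℝ) + cfTail ((List.range k).map fun i => p (i + 1))

def rhoCf (p : Baire) (x : ℝ) : Prop :=
  ((∀ i, 1 ≤ i → 1 ≤ p i) ∧ Tendsto (cfApprox p) atTop (nhds x)) ∨
    (∃ k, 1 ≤ k ∧ p k = 0 ∧ (∀ i, 1 ≤ i → i < k → 1 ≤ p i) ∧
      (2 ≤ k → 2 ≤ p (k - 1)) ∧ x = cfApprox p (k - 1))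

def rhoDec (p : Baire) (x : ℝ) : Prop :=
  (∀ n, 1 ≤ n → p n ≤ 9) ∧
    x = ((Denumerable.ofNat ℤ (p 0) : ℤ) : ℝ) + ∑' n : ℕ, (p (n + 1) : ℝ) / 10 ^ (n + 1)

/-- The implication problem between two representations of ℝ. -/
def implProblem (d1 d2 : Baire → ℝ → Prop) : Problem where
  dom := {p | ∃ x, d1 p x}
  sol := fun p => {q | ∃ x, d1 p x ∧ d2 q x}

/- trees / WKL / choice on Cantor space -/
def wordCode : List Bool → ℕ
  | [] => 0
  | b :: w => 2 * wordCode w + (if b then 2 else 1)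

def prefixList (x : Baire) (k : ℕ) : List Bool := (List.range k).map fun i => decide (x i = 1)

def isTreeCode (t : Baire) : Prop :=
  (∀ n, t n ≤ 1) ∧
    ∀ w v : List Bool, w <+: v → t (wordCode v) = 1 → t (wordCode w) = 1

def WKL : Problem where
  dom := {t | isTreeCode t ∧ {w : List Bool | t (wordCode w) = 1}.Infinite}
  sol := fun t => {x | (∀ n, x n ≤ 1) ∧ ∀ k, t (wordCode (prefixList x k)) = 1}

def Ap (p : Baire) : Set Baire :=
  {x | (∀ n, x n ≤ 1) ∧ ∀ k, wordCode (prefixList x k) ∉ rangeM p}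

def CCantor : Problem where
  dom := {p | (Ap p).Nonempty}
  sol := Ap

def Cle2 : Problem where
  dom := {p | (Ap p).Nonempty ∧ (Ap p).encard ≤ 2}
  sol := Ap

/- limit and parallelization -/
def projCount (r : Baire) (n : ℕ) : Baire := fun k => r (Nat.pair n k)

def limP : Problem where
  dom := {r | ∃ q : Baire, ∀ k, Tendsto (fun n => projCount r n k) atTop (nhds (q k))}
  sol := fun r => {q | ∀ k, Tendsto (fun n => projCount r n k) atTop (nhds (q k))}

def parallel (f : Problem) : Problem where
  dom := {r | ∀ n, projCount r n ∈ f.dom}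
  sol := fun r => {s | ∀ n, projCount s n ∈ f.sol (projCount r n)}

def MCT : Problem where
  dom := {r | ∃ xs : ℕ → ℝ, (∀ n, rhoCauchy (projCount r n) (xs n)) ∧
    Monotone xs ∧ BddAbove (Set.range xs)}
  sol := fun r => {q | ∃ xs : ℕ → ℝ, (∀ n, rhoCauchy (projCount r n) (xs n)) ∧
    Monotone xs ∧ BddAbove (Set.range xs) ∧ rhoCauchy q (⨆ n, xs n)}

/- SORT and RAT -/
open Classical in
noncomputable def sortOut (p : Baire) : Baire := fun k =>
  if {i | p i = 0}.Infinite then 0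
  else if k < {i | p i = 0}.ncard then 0 else 1

noncomputable def SORT : Problem where
  dom := {p | ∀ n, p n ≤ 1}
  sol := fun p => {sortOut p}

def znk (n : ℕ) : Baire := fun k => if k < n then 0 else 1

def RAT : Problem where
  dom := {p | ∃ x, rhoCauchy p x}
  sol := fun p => {s | ∃ x, rhoCauchy p x ∧
    ((∃ n, x = (ratEnum n : ℝ) ∧ s = znk n) ∨
      ((∀ r : ℚ, x ≠ (r : ℝ)) ∧ s = fun _ => 0))}

/- omniscience principles -/
def projFin (m i : ℕ) (r : Baire) : Baire := fun k => r (m * k + i - 1)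
def isZeroSeq (p : Baire) : Prop := ∀ k, p k = 0
def constSeq (i : ℕ) : Baire := fun _ => i

noncomputable def LPOn (n : ℕ) : Problem where
  dom := Set.univ
  sol := fun r => {constSeq ({i | 1 ≤ i ∧ i ≤ n ∧ isZeroSeq (projFin n i r)}.ncard)}

def LLPOn (n : ℕ) : Problem where
  dom := {r | {i | 1 ≤ i ∧ i ≤ n ∧ ¬ isZeroSeq (projFin n i r)}.encard ≤ 1}
  sol := fun r => {s | ∃ i, 1 ≤ i ∧ i ≤ n ∧ isZeroSeq (projFin n i r) ∧ s = constSeq i}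

def MLPOn (n : ℕ) : Problem where
  dom := {r | ∃ i, 1 ≤ i ∧ i ≤ n ∧ isZeroSeq (projFin n i r)}
  sol := fun r => {s | ∃ i, 1 ≤ i ∧ i ≤ n ∧ isZeroSeq (projFin n i r) ∧ s = constSeq i}

def LPO : Problem where
  dom := Set.univ
  sol := fun p => {s | (isZeroSeq p ∧ s = constSeq 1) ∨ (¬ isZeroSeq p ∧ s = constSeq 0)}

/- choice problems on ℕ etc. -/
def Cfin (n : ℕ) : Problem where
  dom := {p | ∃ i, i < n ∧ i ∉ rangeM p}
  sol := fun p => {s | ∃ i, i < n ∧ i ∉ rangeM p ∧ s = constSeq i}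

def ACCfin (n : ℕ) : Problem where
  dom := {p | (∃ i, i < n ∧ i ∉ rangeM p) ∧ ({i | i < n} ∩ rangeM p).encard ≤ 1}
  sol := (Cfin n).sol

def CNat : Problem where
  dom := {p | ∃ i, i ∉ rangeM p}
  sol := fun p => {s | ∃ i, i ∉ rangeM p ∧ s = constSeq i}

/- differentiation -/
instance : Countable (AddMonoidAlgebra ℚ ℕ) :=
  (AddMonoidAlgebra.coeffEquiv (R := ℚ) (M := ℕ)).injective.countable

instance : Countable (Polynomial ℚ) :=
  Polynomial.toFinsupp_injective.countable

noncomputable def polyEnum : ℕ → Polynomial ℚ :=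
  (exists_surjective_nat (Polynomial ℚ)).choose

noncomputable def polyFun (k : ℕ) : C(Set.Icc (0:ℝ) 1, ℝ) :=
  ⟨fun x => ((polyEnum k).map (algebraMap ℚ ℝ)).eval (x : ℝ),
   (((polyEnum k).map (algebraMap ℚ ℝ)).continuous).comp continuous_subtype_val⟩

noncomputable def deltaC (p : Baire) (f : C(Set.Icc (0:ℝ) 1, ℝ)) : Prop :=
  ∀ n, ‖f - polyFun (p n)‖ ≤ (2 : ℝ) ^ (-(n : ℤ))

def IsDerivOn (f g : C(Set.Icc (0:ℝ) 1, ℝ)) : Prop :=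
  ∀ x : Set.Icc (0:ℝ) 1,
    HasDerivWithinAt (Set.IccExtend (by norm_num : (0:ℝ) ≤ 1) f) (g x) (Set.Icc 0 1) (x : ℝ)

noncomputable def diffP : Problem where
  dom := {p | ∃ f g, deltaC p f ∧ IsDerivOn f g}
  sol := fun p => {q | ∃ f g, deltaC p f ∧ IsDerivOn f g ∧ deltaC q g}

/-!
An instance `⟨P, Q⟩` of `SEP₁` becomes a closed subset of Cantor space by removing every word that
puts a `0` on an element of `P` or a `1` on an element of `Q`. Its points are the characteristic
functions of the separators, and as at most one number lies outside `P ∪ Q` there are at most two.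

Conversely, let `A` have at most two points. By compactness a child `w ++ [b]` of a word `w` misses
`A` exactly when it is seen to do so at some finite stage. Enumerate into the first set the words
whose left child dies no later than the right one, and into the second those whose right child
dies strictly first. A separator then names, at every word meeting `A`, a child that still meets
`A`, so the path it dictates from the root lies in `A`. The words left undecided are those both of
whose children meet `A`; since `A` has at most two points, there is at most one such word.
-/

lemma wordCode_injective : Function.Injective wordCode := by
  intro w
  induction w with
  | nil =>
    rintro (_ | ⟨b, v⟩) h
    · rfl
    · cases b <;> simp [wordCode] at h
  | cons a w ih =>
    rintro (_ | ⟨b, v⟩) h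
    · cases a <;> simp [wordCode] at h
    · cases a <;> cases b <;> simp only [wordCode, Bool.false_eq_true, ↓reduceIte] at h <;>
        first | omega | rw [ih (show wordCode w = wordCode v by omega)]

lemma wordCode_surjective : Function.Surjective wordCode := by
  intro n
  induction n using Nat.strong_induction_on with
  | _ n ih =>
    rcases n with _ | m
    · exact ⟨[], rfl⟩
    · obtain ⟨w, hw⟩ := ih (m / 2) (by omega)
      refine ⟨decide (m % 2 = 1) :: w, ?_⟩
      by_cases h : m % 2 = 1 <;> simp [wordCode, h, hw] <;> omega

lemma wordCode_bijective : Function.Bijective wordCode :=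
  ⟨wordCode_injective, wordCode_surjective⟩

lemma length_prefixList (x : Baire) (k : ℕ) : (prefixList x k).length = k := by
  simp [prefixList]

lemma getElem?_prefixList (x : Baire) (k i : ℕ) :
    (prefixList x k)[i]? = if i < k then some (decide (x i = 1)) else none := by
  split_ifs with h <;> simp [prefixList, h]

lemma prefixList_succ (x : Baire) (k : ℕ) :
    prefixList x (k + 1) = prefixList x k ++ [decide (x k = 1)] := by
  simp [prefixList, List.range_succ]

lemma take_prefixList (x : Baire) (k m : ℕ) :
    (prefixList x m).take k = prefixList x (min k m) := by
  simp [prefixList, ← List.map_take, List.take_range]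

lemma chi_eq_one_iff {A : Set ℕ} {n : ℕ} : chi A n = 1 ↔ n ∈ A := by
  by_cases h : n ∈ A <;> simp [chi, h]

lemma eq_chi_of_le_one {x : Baire} (hx : ∀ n, x n ≤ 1) : x = chi {n | x n = 1} := by
  funext n
  rcases Nat.le_one_iff_eq_zero_or_eq_one.1 (hx n) with h | h <;> simp [chi, h]

lemma pfst_pairB (a b : Baire) : pfst (pairB a b) = a := by
  funext n
  simp [pfst, pairB]

lemma psnd_pairB (a b : Baire) : psnd (pairB a b) = b := by
  funext n
  simp [psnd, pairB, Nat.add_mod, show (2 * n + 1) / 2 = n by omega]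

lemma continuous_of_finite_dependence {X : Type*} [TopologicalSpace X] {F : Baire → X}
    (h : ∀ p, ∃ S : Finset ℕ, ∀ p', (∀ i ∈ S, p' i = p i) → F p' = F p) :
    Continuous F := by
  refine continuous_iff_continuousAt.2 fun p => ?_
  obtain ⟨S, hS⟩ := h p
  refine EventuallyEq.continuousAt (y := F p) ?_
  have hnear : ∀ᶠ p' in 𝓝 p, ∀ i ∈ S, p' i = p i :=
    (eventually_all_finset S).2 fun i _ =>
      (continuous_apply i).continuousAt.eventually (isOpen_discrete {p i} |>.mem_nhds rfl)
  exact hnear.mono fun p' hp' => hS p' hp'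

lemma continuous_prefixList (k : ℕ) : Continuous fun x : Baire => prefixList x k :=
  continuous_of_finite_dependence fun x => ⟨Finset.range k, fun y hy =>
    List.map_congr_left fun i hi => by rw [hy i (by simpa using hi)]⟩

lemma Continuous.pairB {F G : Baire → Baire} (hF : Continuous F) (hG : Continuous G) :
    Continuous fun p => pairB (F p) (G p) := by
  refine continuous_pi fun n => ?_
  unfold _root_.pairB
  split
  · exact (continuous_apply _).comp hF
  · exact (continuous_apply _).comp hG

open Classical in
noncomputable def enumWords (Q : Baire → List Bool → ℕ → Prop) (p : Baire) : Baire :=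
  fun m => if ∃ w, wordCode w = m.unpair.1 ∧ Q p w m.unpair.2 then m.unpair.1 + 1 else 0

section enumWords

variable {Q : Baire → List Bool → ℕ → Prop}

lemma rangeM_enumWords (p : Baire) :
    rangeM (enumWords Q p) = wordCode '' {w | ∃ s, Q p w s} := by
  ext c
  constructor
  · rintro ⟨m, hm⟩
    simp only [enumWords] at hm
    split_ifs at hm with h
    · obtain ⟨w, hw, hQ⟩ := h
      exact ⟨w, ⟨_, hQ⟩, by omega⟩
  · rintro ⟨w, ⟨s, hQ⟩, rfl⟩
    refine ⟨Nat.pair (wordCode w) s, ?_⟩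
    simp only [enumWords]
    rw [Nat.unpair_pair, if_pos ⟨w, rfl, hQ⟩]

lemma wordCode_mem_rangeM_enumWords {p : Baire} {w : List Bool} :
    wordCode w ∈ rangeM (enumWords Q p) ↔ ∃ s, Q p w s := by
  rw [rangeM_enumWords, wordCode_injective.mem_set_image, Set.mem_ofPred_eq]

lemma mem_Ap_enumWords_iff {p x : Baire} :
    x ∈ Ap (enumWords Q p) ↔ (∀ n, x n ≤ 1) ∧ ∀ k s, ¬ Q p (prefixList x k) s := by
  simp [Ap, rangeM_enumWords, wordCode_injective.mem_set_image]

lemma continuous_enumWords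
    (hQ : ∀ s, ∃ N, ∀ p p', (∀ i < N, p' i = p i) → ∀ w, Q p' w s ↔ Q p w s) :
    Continuous (enumWords Q) := by
  refine continuous_pi fun m => continuous_of_finite_dependence fun p => ?_
  obtain ⟨N, hN⟩ := hQ m.unpair.2
  refine ⟨Finset.range N, fun p' hp' => ?_⟩
  have hiff := hN p p' fun i hi => hp' i (Finset.mem_range.2 hi)
  simp only [enumWords]
  congr 1
  exact propext (exists_congr fun w => and_congr_right' (hiff w))

end enumWords

def separators (P Q : Set ℕ) : Set (Set ℕ) := {A | P ⊆ A ∧ A ⊆ Qᶜ}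

lemma encard_separators_le_two {P Q : Set ℕ} (h : (P ∪ Q)ᶜ.encard ≤ 1) :
    (separators P Q).encard ≤ 2 := by
  have hsub : separators P Q ⊆ {P, P ∪ (P ∪ Q)ᶜ} := by
    rintro A ⟨hPA, hAQ⟩
    by_cases hAP : A ⊆ P
    · exact Or.inl (hAP.antisymm hPA)
    · obtain ⟨m, hmA, hmP⟩ := Set.not_subset.1 hAP
      have hm : m ∈ (P ∪ Q)ᶜ := fun h => h.elim hmP (hAQ hmA)
      have hcompl : (P ∪ Q)ᶜ = {m} :=
        (Set.encard_le_one_iff_subsingleton.1 h).eq_singleton_of_mem hm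
      refine Or.inr (Set.Subset.antisymm (fun n hn => ?_) (Set.union_subset hPA ?_))
      · by_cases hnP : n ∈ P
        · exact Or.inl hnP
        · exact Or.inr fun h => h.elim hnP (hAQ hn)
      · rw [hcompl, Set.singleton_subset_iff]
        exact hmA
  calc (separators P Q).encard ≤ ({P, P ∪ (P ∪ Q)ᶜ} : Set (Set ℕ)).encard := Set.encard_mono hsub
    _ ≤ 2 := (Set.encard_insert_le _ _).trans (by norm_num)

def ViolatesAt (r : Baire) (w : List Bool) (s : ℕ) : Prop :=
  ∃ i, (pfst r s = i + 1 ∧ w[i]? = some false) ∨ (psnd r s = i + 1 ∧ w[i]? = some true)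

lemma forall_not_violatesAt_iff (r x : Baire) :
    (∀ k s, ¬ ViolatesAt r (prefixList x k) s) ↔
      {n | x n = 1} ∈ separators (rangeM (pfst r)) (rangeM (psnd r)) := by
  simp only [ViolatesAt, getElem?_prefixList, Option.ite_none_right_eq_some, Option.some.injEq,
    decide_eq_false_iff_not, decide_eq_true_eq, not_exists, not_or, not_and, Decidable.not_not,
    separators, rangeM, Set.subset_def, Set.mem_ofPred_eq, forall_exists_index,
    Set.mem_compl_iff]
  constructor
  · intro h
    exact ⟨fun i s hs => (h (i + 1) s i).1 hs (by omega),
      fun i hi s hs => (h (i + 1) s i).2 hs (by omega) hi⟩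
  · rintro ⟨h1, h2⟩ k s i
    exact ⟨fun hs _ => h1 i s hs, fun hs _ hi => h2 i hi s hs⟩

noncomputable def sepToChoice : Baire → Baire := enumWords ViolatesAt

lemma continuous_sepToChoice : Continuous sepToChoice :=
  continuous_enumWords fun s => ⟨2 * s + 2, fun r r' h w => by
    simp only [ViolatesAt, pfst, psnd, h (2 * s) (by omega), h (2 * s + 1) (by omega)]⟩

lemma Ap_sepToChoice (r : Baire) :
    Ap (sepToChoice r) = chi '' separators (rangeM (pfst r)) (rangeM (psnd r)) := by
  ext x
  rw [sepToChoice, mem_Ap_enumWords_iff, forall_not_violatesAt_iff]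
  constructor
  · rintro ⟨hx, hsep⟩
    exact ⟨_, hsep, (eq_chi_of_le_one hx).symm⟩
  · rintro ⟨A, hA, rfl⟩
    refine ⟨fun n => ?_, ?_⟩
    · by_cases h : n ∈ A <;> simp [chi, h]
    · simpa only [chi_eq_one_iff, Set.ofPred_mem_eq] using hA

lemma sepToChoice_mem_Cle2_dom {r : Baire} (hr : r ∈ SEP1.dom) : sepToChoice r ∈ Cle2.dom := by
  obtain ⟨hdisj, hcompl⟩ := hr
  rw [Cle2, Set.mem_ofPred_eq, Ap_sepToChoice, Set.image_nonempty]
  refine ⟨⟨_, subset_rfl, Set.subset_compl_iff_disjoint_right.2 ?_⟩,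
    (Set.encard_image_le _ _).trans (encard_separators_le_two hcompl)⟩
  exact Set.disjoint_iff_inter_eq_empty.2 hdisj

theorem swRed_SEP1_Cle2 : SWRed SEP1 Cle2 := by
  refine ⟨Set.univ, Set.univ, sepToChoice, id, continuous_sepToChoice.continuousOn,
    continuousOn_id, fun r hr => ⟨trivial, sepToChoice_mem_Cle2_dom hr, fun q hq => ⟨trivial, ?_⟩⟩⟩
  change q ∈ Ap (sepToChoice r) at hq
  obtain ⟨A, hA, rfl⟩ := Ap_sepToChoice r ▸ hq
  exact ⟨A, rfl, hA⟩

def cylinder (w : List Bool) : Set Baire := {x | prefixList x w.length = w}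

def ApStage (p : Baire) (s : ℕ) : Set Baire :=
  {x | (∀ n, x n ≤ 1) ∧ ∀ k, ∀ t ≤ s, p t ≠ wordCode (prefixList x k) + 1}

lemma isClosed_cylinder (w : List Bool) : IsClosed (cylinder w) :=
  (isClosed_discrete {w}).preimage (continuous_prefixList w.length)

lemma isClosed_ApStage (p : Baire) (s : ℕ) : IsClosed (ApStage p s) := by
  have hdef : ApStage p s = (⋂ n, (fun x : Baire => x n) ⁻¹' {a | a ≤ 1}) ∩
      ⋂ k, (fun x => prefixList x k) ⁻¹' {w | ∀ t ≤ s, p t ≠ wordCode w + 1} := by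
    ext
    simp [ApStage]
  rw [hdef]
  exact (isClosed_iInter fun n => (isClosed_discrete _).preimage (continuous_apply n)).inter
    (isClosed_iInter fun k => (isClosed_discrete _).preimage (continuous_prefixList k))

lemma isCompact_ApStage (p : Baire) (s : ℕ) : IsCompact (ApStage p s) := by
  have hcantor : IsCompact (Set.univ.pi fun _ : ℕ => Set.Iic 1) :=
    isCompact_univ_pi fun _ => (Set.finite_Iic 1).isCompact
  exact hcantor.of_isClosed_subset (isClosed_ApStage p s) fun x hx n _ => hx.1 n

lemma ApStage_anti (p : Baire) {s s' : ℕ} (h : s ≤ s') : ApStage p s' ⊆ ApStage p s :=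
  fun _ hx => ⟨hx.1, fun k t ht => hx.2 k t (ht.trans h)⟩

lemma Ap_eq_iInter_ApStage (p : Baire) : Ap p = ⋂ s, ApStage p s := by
  ext x
  simp only [Ap, ApStage, rangeM, Set.mem_iInter, Set.mem_ofPred_eq]
  constructor
  · rintro ⟨hx, h⟩ s
    exact ⟨hx, fun k t _ ht => h k ⟨t, ht⟩⟩
  · intro h
    exact ⟨(h 0).1, fun k ⟨t, ht⟩ => (h t).2 k t le_rfl ht⟩

lemma ApStage_congr {p p' : Baire} {s : ℕ} (h : ∀ t ≤ s, p' t = p t) :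
    ApStage p' s = ApStage p s := by
  ext x
  simp +contextual [ApStage, h]

lemma Ap_subset_ApStage (p : Baire) (s : ℕ) : Ap p ⊆ ApStage p s :=
  (Ap_eq_iInter_ApStage p).trans_subset (Set.iInter_subset _ s)

lemma nonempty_Ap_inter_of_forall_ApStage {p : Baire} {C : Set Baire} (hC : IsClosed C)
    (h : ∀ s, (ApStage p s ∩ C).Nonempty) : (Ap p ∩ C).Nonempty := by
  rw [Ap_eq_iInter_ApStage, Set.iInter_inter]
  exact IsCompact.nonempty_iInter_of_sequence_nonempty_isCompact_isClosed _
    (fun s => Set.inter_subset_inter_left _ (ApStage_anti p s.le_succ)) h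
    ((isCompact_ApStage p 0).inter_right hC) fun s => (isClosed_ApStage p s).inter hC

lemma mem_cylinder_append_singleton {x : Baire} {w : List Bool} {b : Bool} :
    x ∈ cylinder (w ++ [b]) ↔ x ∈ cylinder w ∧ decide (x w.length = 1) = b := by
  simp only [cylinder, Set.mem_ofPred_eq, List.length_append, List.length_singleton,
    prefixList_succ]
  constructor
  · intro h
    obtain ⟨h1, h2⟩ := List.append_inj h (by rw [length_prefixList])
    exact ⟨h1, by simpa using h2⟩
  · rintro ⟨h1, h2⟩
    rw [h1, h2]

lemma prefixList_eq_take_of_mem_cylinder {x : Baire} {w : List Bool} (hx : x ∈ cylinder w)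
    {k : ℕ} (hk : k ≤ w.length) : prefixList x k = w.take k := by
  rw [← hx, take_prefixList, min_eq_left hk]

lemma mem_Ap_of_forall_nonempty {p x : Baire} (hx : ∀ n, x n ≤ 1)
    (h : ∀ k, (Ap p ∩ cylinder (prefixList x k)).Nonempty) : x ∈ Ap p := by
  refine ⟨hx, fun k => ?_⟩
  obtain ⟨y, hy, hyk⟩ := h k
  have : prefixList y k = prefixList x k := by simpa [cylinder, length_prefixList] using hyk
  exact this ▸ hy.2 k

def DeadAt (p : Baire) (s : ℕ) (w : List Bool) : Prop := ApStage p s ∩ cylinder w = ∅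

section DeadAt

variable {p : Baire} {w : List Bool}

lemma DeadAt.mono {s s' : ℕ} (h : s ≤ s') (hd : DeadAt p s w) : DeadAt p s' w :=
  Set.subset_eq_empty (Set.inter_subset_inter_left _ (ApStage_anti p h)) hd

lemma not_deadAt_of_nonempty (h : (Ap p ∩ cylinder w).Nonempty) (s : ℕ) : ¬ DeadAt p s w :=
  (h.mono (Set.inter_subset_inter_left _ (Ap_subset_ApStage p s))).ne_empty

lemma exists_deadAt_of_Ap_inter_eq_empty (h : Ap p ∩ cylinder w = ∅) : ∃ s, DeadAt p s w := by
  by_contra! hlive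
  exact Set.not_nonempty_iff_eq_empty.2 h <|
    nonempty_Ap_inter_of_forall_ApStage (isClosed_cylinder w) fun s =>
      Set.nonempty_iff_ne_empty.2 (hlive s)

lemma deadAt_congr {p' : Baire} {s : ℕ} (h : ∀ t ≤ s, p' t = p t) :
    DeadAt p' s w ↔ DeadAt p s w := by
  rw [DeadAt, DeadAt, ApStage_congr h]

end DeadAt

/-- A tie (both children of `w` dying at the same stage) counts as forcing right, which makes
`ForcedRightAt` and `ForcedLeftAt` exclusive and, unless `w` branches, exhaustive. -/
def ForcedRightAt (p : Baire) (w : List Bool) (s : ℕ) : Prop :=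
  DeadAt p s (w ++ [false]) ∧ ∀ s' < s, ¬ DeadAt p s' (w ++ [true])

def ForcedLeftAt (p : Baire) (w : List Bool) (s : ℕ) : Prop :=
  DeadAt p s (w ++ [true]) ∧ ¬ DeadAt p s (w ++ [false])

def IsBranching (p : Baire) (w : List Bool) : Prop :=
  ∀ b, (Ap p ∩ cylinder (w ++ [b])).Nonempty

section Forced

variable {p : Baire} {w : List Bool}

lemma not_forcedRightAt_of_forcedLeftAt {s s' : ℕ} (hL : ForcedLeftAt p w s') :
    ¬ ForcedRightAt p w s := by
  rintro ⟨hdead0, halive1⟩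
  have hlt : s' < s := lt_of_not_ge fun hle => hL.2 (hdead0.mono hle)
  exact halive1 s' hlt hL.1

lemma isBranching_of_not_forced (hR : ∀ s, ¬ ForcedRightAt p w s)
    (hL : ∀ s, ¬ ForcedLeftAt p w s) : IsBranching p w := by
  classical
  have hlive : ∀ s b, ¬ DeadAt p s (w ++ [b]) := by
    by_contra! hdead
    have hex : ∃ s, DeadAt p s (w ++ [false]) ∨ DeadAt p s (w ++ [true]) := by
      obtain ⟨s, b, hb⟩ := hdead
      cases b
      exacts [⟨s, Or.inl hb⟩, ⟨s, Or.inr hb⟩]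
    by_cases h0 : DeadAt p (Nat.find hex) (w ++ [false])
    · exact hR _ ⟨h0, fun s' hs' h1 => Nat.find_min hex hs' (Or.inr h1)⟩
    · exact hL _ ⟨(Nat.find_spec hex).resolve_left h0, h0⟩
  intro b
  by_contra hb
  obtain ⟨s, hs⟩ := exists_deadAt_of_Ap_inter_eq_empty (Set.not_nonempty_iff_eq_empty.1 hb)
  exact hlive s b hs

lemma IsBranching.Ap_subset_cylinder (h2 : (Ap p).encard ≤ 2) (hw : IsBranching p w) :
    Ap p ⊆ cylinder w := by
  obtain ⟨x0, hx0, hx0w⟩ := hw false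
  obtain ⟨x1, hx1, hx1w⟩ := hw true
  rw [mem_cylinder_append_singleton] at hx0w hx1w
  have hne : x0 ≠ x1 := fun h => by simp [h, hx1w.2] at hx0w
  have hpair : ({x0, x1} : Set Baire) = Ap p :=
    (Set.finite_of_encard_le_coe h2).eq_of_subset_of_encard_le' (Set.pair_subset hx0 hx1)
      (h2.trans_eq (Set.encard_pair hne).symm)
  rw [← hpair]
  rintro y (rfl | rfl)
  exacts [hx0w.1, hx1w.1]

lemma IsBranching.eq_of_length_le (h2 : (Ap p).encard ≤ 2) {w' : List Bool}
    (hw : IsBranching p w) (hw' : IsBranching p w') (hlen : w.length ≤ w'.length) : w = w' := by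
  obtain ⟨x0, hx0, hx0w⟩ := hw false
  obtain ⟨x1, hx1, hx1w⟩ := hw true
  have hx0w' := hw'.Ap_subset_cylinder h2 hx0
  have hx1w' := hw'.Ap_subset_cylinder h2 hx1
  rcases hlen.lt_or_eq with hlt | heq
  · have h0 := prefixList_eq_take_of_mem_cylinder hx0w' hlt
    have h1 := prefixList_eq_take_of_mem_cylinder hx1w' hlt
    have : w ++ [false] = w ++ [true] := by
      rw [← hx0w, ← hx1w]
      simpa [cylinder] using h0.trans h1.symm
    simp at this
  · rw [mem_cylinder_append_singleton] at hx0w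
    rw [← hx0w.1, heq]
    exact hx0w'

lemma IsBranching.eq (h2 : (Ap p).encard ≤ 2) {w' : List Bool} (hw : IsBranching p w)
    (hw' : IsBranching p w') : w = w' :=
  (le_total w.length w'.length).elim (hw.eq_of_length_le h2 hw')
    fun h => (hw'.eq_of_length_le h2 hw h).symm

end Forced

noncomputable def choiceToSep (p : Baire) : Baire :=
  pairB (enumWords ForcedRightAt p) (enumWords ForcedLeftAt p)

lemma continuous_choiceToSep : Continuous choiceToSep := by
  have hdead : ∀ {p p' : Baire} {s : ℕ}, (∀ i < s + 1, p' i = p i) →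
      ∀ s' ≤ s, ∀ v, DeadAt p' s' v ↔ DeadAt p s' v :=
    fun h s' hs' _ => deadAt_congr fun t ht => h t (by omega)
  refine Continuous.pairB (continuous_enumWords fun s => ⟨s + 1, fun p p' h w => ?_⟩)
    (continuous_enumWords fun s => ⟨s + 1, fun p p' h w => ?_⟩)
  · simp only [ForcedRightAt, hdead h s le_rfl]
    exact and_congr_right' (forall₂_congr fun s' hs' => by rw [hdead h s' hs'.le])
  · simp only [ForcedLeftAt, hdead h s le_rfl]

def followWord (q : Baire) : ℕ → List Bool
  | 0 => []
  | n + 1 => followWord q n ++ [decide (q (wordCode (followWord q n)) = 1)]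

def followPath (q : Baire) : Baire := fun n => if q (wordCode (followWord q n)) = 1 then 1 else 0

lemma prefixList_followPath (q : Baire) (n : ℕ) : prefixList (followPath q) n = followWord q n := by
  induction n with
  | zero => rfl
  | succ n ih =>
    rw [prefixList_succ, ih, followWord]
    by_cases h : q (wordCode (followWord q n)) = 1 <;> simp [followPath, h]

lemma followWord_congr {q q' : Baire} {n : ℕ}
    (h : ∀ i < n, q' (wordCode (followWord q i)) = q (wordCode (followWord q i))) :
    followWord q' n = followWord q n := by
  induction n with
  | zero => rfl
  | succ n ih =>
    rw [followWord, followWord, ih fun i hi => h i (by omega), h n (by omega)]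

lemma continuous_followPath : Continuous followPath := by
  refine continuous_pi fun n => continuous_of_finite_dependence fun q => ?_
  refine ⟨(Finset.range (n + 1)).image fun i => wordCode (followWord q i), fun q' h => ?_⟩
  have hq : ∀ i < n + 1, q' (wordCode (followWord q i)) = q (wordCode (followWord q i)) :=
    fun i hi => h _ (Finset.mem_image_of_mem _ (Finset.mem_range.2 hi))
  have hw : followWord q' n = followWord q n := followWord_congr fun i hi => hq i (by omega)
  simp only [followPath, hw, hq n (by omega)]

lemma nonempty_Ap_inter_cylinder_append {p : Baire} {w : List Bool}
    (hw : (Ap p ∩ cylinder w).Nonempty) {b : Bool} (hR : (∃ s, ForcedRightAt p w s) → b = true)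
    (hL : (∃ s, ForcedLeftAt p w s) → b = false) : (Ap p ∩ cylinder (w ++ [b])).Nonempty := by
  by_contra hb
  obtain ⟨s, hs⟩ := exists_deadAt_of_Ap_inter_eq_empty (Set.not_nonempty_iff_eq_empty.1 hb)
  obtain ⟨x, hx, hxw⟩ := hw
  have hother : (Ap p ∩ cylinder (w ++ [!b])).Nonempty := by
    refine ⟨x, hx, mem_cylinder_append_singleton.2 ⟨hxw, ?_⟩⟩
    by_contra hne
    exact hb ⟨x, hx, mem_cylinder_append_singleton.2 ⟨hxw, by simpa using hne⟩⟩
  cases b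
  · exact Bool.false_ne_true (hR ⟨s, hs, fun s' _ => not_deadAt_of_nonempty hother s'⟩)
  · exact Bool.false_ne_true (hL ⟨s, hs, not_deadAt_of_nonempty hother s⟩).symm

lemma nonempty_Ap_inter_cylinder_followWord {p q : Baire} (hne : (Ap p).Nonempty)
    (hq : q ∈ SEP.sol (choiceToSep p)) (n : ℕ) : (Ap p ∩ cylinder (followWord q n)).Nonempty := by
  obtain ⟨A, rfl, hRA, hAL⟩ := hq
  rw [choiceToSep, pfst_pairB] at hRA
  rw [choiceToSep, psnd_pairB] at hAL
  induction n with
  | zero => simpa [cylinder, followWord, prefixList] using hne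
  | succ n ih =>
    refine nonempty_Ap_inter_cylinder_append ih (fun hR => ?_) (fun hL => ?_)
    · simpa [chi_eq_one_iff] using hRA (wordCode_mem_rangeM_enumWords.2 hR)
    · simpa [chi_eq_one_iff] using fun hA => hAL hA (wordCode_mem_rangeM_enumWords.2 hL)

lemma choiceToSep_mem_SEP1_dom {p : Baire} (h2 : (Ap p).encard ≤ 2) :
    choiceToSep p ∈ SEP1.dom := by
  refine ⟨?_, ?_⟩
  · simp only [choiceToSep, pfst_pairB, psnd_pairB, rangeM_enumWords,
      ← Set.image_inter wordCode_injective, Set.image_eq_empty]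
    exact Set.eq_empty_iff_forall_notMem.2 fun w ⟨⟨s, hR⟩, ⟨s', hL⟩⟩ =>
      not_forcedRightAt_of_forcedLeftAt hL hR
  · simp only [choiceToSep, pfst_pairB, psnd_pairB, rangeM_enumWords, ← Set.image_union,
      ← Set.image_compl_eq wordCode_bijective, Set.encard_le_one_iff_subsingleton]
    refine Set.Subsingleton.image (fun w hw w' hw' => ?_) _
    simp only [Set.mem_compl_iff, Set.mem_union, Set.mem_ofPred_eq, not_or, not_exists] at hw hw'
    exact (isBranching_of_not_forced hw.1 hw.2).eq h2 (isBranching_of_not_forced hw'.1 hw'.2)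

theorem swRed_Cle2_SEP1 : SWRed Cle2 SEP1 := by
  refine ⟨Set.univ, Set.univ, choiceToSep, followPath, continuous_choiceToSep.continuousOn,
    continuous_followPath.continuousOn, fun p ⟨hne, h2⟩ =>
      ⟨trivial, choiceToSep_mem_SEP1_dom h2, fun q hq => ⟨trivial, ?_⟩⟩⟩
  refine mem_Ap_of_forall_nonempty (fun n => ?_) fun k => ?_
  · unfold followPath
    split <;> simp
  · rw [prefixList_followPath]
    exact nonempty_Ap_inter_cylinder_followWord hne hq k

/-- `C_{#≤2} ≡_sW SEP₁` (strong continuous Weihrauch equivalence). -/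
theorem Cle2_sequiv_SEP1 : SWEquiv Cle2 SEP1 := ⟨swRed_Cle2_SEP1, swRed_SEP1_Cle2⟩
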